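/- Fix a positive integer q, an integer p, real numbers x₂, x₃, and a ∈ ℝ; set χ = e^{2πia}. Then each operator T(n), n ∈ Heis₃(ℤ), maps H_{χ,q} into itself and restricts to a unitary operator on H_{χ,q}; moreover the map W : H_{χ,q} → ℂ^{ℤ/qℤ} defined by (Wφ)(k) = e^{−2πika/q}·φ(k) for k ∈ {0,…,q−1} is unitary and satisfies W ∘ T(n)|_{H_{χ,q}} ∘ W⁻¹ = ρ_{(p/q, x₂, x₃+a)}(n) for every n ∈ Heis₃(ℤ). Thus the restriction of the extended action to H_{χ,q} is unitarily equivalent to ρ_{(p/q, x₂, x₃+a)}. -/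

import Mathlib

open Real

/-- `χ = e^{2πia}`. -/
noncomputable def chiA (a : ℝ) : ℂ := Complex.exp (2 * (π : ℂ) * Complex.I * (a : ℝ))

/-- Membership in `H_{χ,q}`, the space of `φ : ℤ → ℂ` with `φ(k+q) = χ·φ(k)` for all `k`. -/
def memH (q : ℕ) (a : ℝ) (φ : ℤ → ℂ) : Prop :=
  ∀ k : ℤ, φ (k + (q : ℤ)) = chiA a * φ k

/-- The inner product `∑_{k=0}^{q−1} φ(k) conj(ψ(k))` on functions `ℤ → ℂ`. -/
noncomputable def ipH (q : ℕ) (φ ψ : ℤ → ℂ) : ℂ :=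
  ∑ k ∈ Finset.range q, φ (k : ℤ) * (starRingEnd ℂ) (ψ (k : ℤ))

/-- The extended action `T(n)` on functions `φ : ℤ → ℂ`:
`(T(n)φ)(k) = exp((2πi/q)(n₃x₃ + n₂x₂ + n₁p + k n₂ p)) φ(k+n₃)`, `k` ranging over `ℤ`. -/
noncomputable def Text (q : ℕ) (p : ℤ) (x₂ x₃ : ℝ) (n : ℤ × ℤ × ℤ) (φ : ℤ → ℂ) : ℤ → ℂ :=
  fun k => Complex.exp ((2 * (π : ℂ) * Complex.I / (q : ℂ)) *
      ((n.2.2 : ℂ) * (x₃ : ℂ) + (n.2.1 : ℂ) * (x₂ : ℂ) + (n.1 : ℂ) * (p : ℂ) +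
        (k : ℂ) * (n.2.1 : ℂ) * (p : ℂ))) * φ (k + n.2.2)

/-- The map `W : H_{χ,q} → ℂ^{ℤ/qℤ}`, `(Wφ)(k) = e^{−2πika/q} φ(k)` for `k ∈ {0,…,q−1}`. -/
noncomputable def Wmap (q : ℕ) [NeZero q] (a : ℝ) (φ : ℤ → ℂ) : EuclideanSpace ℂ (ZMod q) :=
  WithLp.toLp 2 (fun k => Complex.exp (-(2 * (π : ℂ) * Complex.I * (k.val : ℂ) * (a : ℝ) / (q : ℂ))) *
    φ (k.val : ℤ))

/-- The finite-dimensional representation `ρ_{(p/q, x₂, x₃)}` on `ℂ^{ℤ/qℤ}`. -/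
noncomputable def rhoFin (q : ℕ) [NeZero q] (p : ℤ) (x₂ x₃ : ℝ) (n : ℤ × ℤ × ℤ)
    (φ : EuclideanSpace ℂ (ZMod q)) : EuclideanSpace ℂ (ZMod q) :=
  WithLp.toLp 2 (fun k => Complex.exp ((2 * (π : ℂ) * Complex.I / (q : ℂ)) *
      ((n.2.2 : ℂ) * (x₃ : ℂ) + (n.2.1 : ℂ) * (x₂ : ℂ) + (n.1 : ℂ) * (p : ℂ) +
        (k.val : ℂ) * (n.2.1 : ℂ) * (p : ℂ))) *
    φ (k + (n.2.2 : ZMod q)))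

/- ### auxiliary lemmas -/

lemma chiA_ne (a : ℝ) : chiA a ≠ 0 := Complex.exp_ne_zero _

lemma chiA_zero : chiA (0 : ℝ) = 1 := by simp [chiA]

lemma memH_shift {q : ℕ} {a : ℝ} {φ : ℤ → ℂ} (h : memH q a φ) (m k : ℤ) :
    φ (k + (q : ℤ) * m) = chiA a ^ m * φ k := by
  induction m using Int.induction_on with
  | zero => simp
  | succ i ih =>
      have e : k + (q:ℤ) * (i+1) = (k + q*i) + q := by ring
      rw [e, h, ih, zpow_add₀ (chiA_ne a), zpow_one]; ring
  | pred i ih =>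
      have h2 : φ (k + (q:ℤ) * (-i-1) + q) = chiA a * φ (k + q*(-i-1)) := h _
      have e : k + (q:ℤ) * (-i-1) + q = k + q * (-i) := by ring
      rw [e, ih] at h2
      have key : chiA a ^ (-(i:ℤ)) = chiA a * chiA a ^ (-(i:ℤ)-1) := by
        rw [← zpow_one_add₀ (chiA_ne a)]; congr 1; ring
      rw [key, mul_assoc] at h2
      exact (mul_left_cancel₀ (chiA_ne a) h2).symm

lemma val_shift (q : ℕ) [NeZero q] (z : ℤ) :
    ∃ m : ℤ, z = ((z : ZMod q).val : ℤ) + q * m := by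
  have h0 : (((z - ((z : ZMod q).val : ℤ)) : ℤ) : ZMod q) = 0 := by
    push_cast
    rw [ZMod.natCast_rightInverse (z : ZMod q)]
    ring
  obtain ⟨m, hm⟩ := (ZMod.intCast_zmod_eq_zero_iff_dvd _ q).mp h0
  exact ⟨m, by linarith⟩

lemma sum_range_eq_sum_zmod (q : ℕ) [NeZero q] (F : ZMod q → ℂ) :
    ∑ k ∈ Finset.range q, F ((k : ℕ) : ZMod q) = ∑ x : ZMod q, F x := by
  refine Finset.sum_nbij' (fun k => ((k : ℕ) : ZMod q)) (fun x => x.val) ?_ ?_ ?_ ?_ ?_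
  · intro k hk; exact Finset.mem_univ _
  · intro x _; exact Finset.mem_range.mpr (ZMod.val_lt x)
  · intro k hk; exact ZMod.val_cast_of_lt (Finset.mem_range.mp hk)
  · intro x _; exact ZMod.natCast_rightInverse x
  · intro k _; rfl

lemma periodic_factor (q : ℕ) [NeZero q] (g : ℤ → ℂ) (hg : ∀ m k : ℤ, g (k + q * m) = g k)
    (z : ℤ) : g z = g ((z : ZMod q).val : ℤ) := by
  obtain ⟨m, hm⟩ := val_shift q z
  conv_lhs => rw [hm]
  rw [hg]

lemma sum_shift (q : ℕ) [NeZero q] (g : ℤ → ℂ) (hg : ∀ m k : ℤ, g (k + q * m) = g k)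
    (t : ℤ) : ∑ k ∈ Finset.range q, g ((k : ℤ) + t) = ∑ k ∈ Finset.range q, g (k : ℤ) := by
  have h1 : ∑ k ∈ Finset.range q, g ((k : ℤ) + t)
      = ∑ k ∈ Finset.range q, (fun x : ZMod q => g (x.val : ℤ)) (((k:ℕ) : ZMod q) + (t : ZMod q)) := by
    refine Finset.sum_congr rfl fun k _ => ?_
    rw [periodic_factor q g hg ((k:ℤ) + t)]
    congr 2
    push_cast
    ring
  rw [h1, sum_range_eq_sum_zmod q (fun x => (fun y : ZMod q => g (y.val : ℤ)) (x + (t : ZMod q)))]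
  rw [show (∑ x : ZMod q, (fun y : ZMod q => g (y.val : ℤ)) (x + (t : ZMod q)))
      = ∑ x : ZMod q, g (x.val : ℤ) from
    Equiv.sum_comp (Equiv.addRight ((t : ZMod q))) (fun x : ZMod q => g (x.val : ℤ))]
  rw [← sum_range_eq_sum_zmod q (fun x : ZMod q => g (x.val : ℤ))]
  refine Finset.sum_congr rfl fun k hk => ?_
  simp [ZMod.val_cast_of_lt (Finset.mem_range.mp hk)]

lemma exp_mul_conj_exp (r : ℂ) (hr : (starRingEnd ℂ) r = -r) :
    Complex.exp r * (starRingEnd ℂ) (Complex.exp r) = 1 := by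
  rw [← Complex.exp_conj, hr, ← Complex.exp_add, add_neg_cancel, Complex.exp_zero]


/-- Each `T(n)` maps `H_{χ,q}` into itself and restricts to a unitary
operator on it; the map `W : H_{χ,q} → ℂ^{ℤ/qℤ}` given by `(Wφ)(k) = e^{−2πika/q} φ(k)` is
unitary; and `W` intertwines the restricted action with `ρ_{(p/q, x₂, x₃+a)}`. -/
theorem extended_action_equivalent_rhoFin (q : ℕ) [NeZero q] (p : ℤ) (x₂ x₃ a : ℝ) :
    -- `T(n)` maps `H_{χ,q}` into itself
    (∀ (n : ℤ × ℤ × ℤ) (φ : ℤ → ℂ), memH q a φ → memH q a (Text q p x₂ x₃ n φ)) ∧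
    -- `T(n)` is linear
    (∀ (n : ℤ × ℤ × ℤ) (c : ℂ) (φ ψ : ℤ → ℂ),
      Text q p x₂ x₃ n (c • φ + ψ) = c • Text q p x₂ x₃ n φ + Text q p x₂ x₃ n ψ) ∧
    -- `T(n)` preserves the inner product of `H_{χ,q}`
    (∀ (n : ℤ × ℤ × ℤ) (φ ψ : ℤ → ℂ), memH q a φ → memH q a ψ →
      ipH q (Text q p x₂ x₃ n φ) (Text q p x₂ x₃ n ψ) = ipH q φ ψ) ∧
    -- `T(n)` maps `H_{χ,q}` onto itself
    (∀ (n : ℤ × ℤ × ℤ) (ψ : ℤ → ℂ), memH q a ψ →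
      ∃ φ : ℤ → ℂ, memH q a φ ∧ Text q p x₂ x₃ n φ = ψ) ∧
    -- `W` is linear
    (∀ (c : ℂ) (φ ψ : ℤ → ℂ), Wmap q a (c • φ + ψ) = c • Wmap q a φ + Wmap q a ψ) ∧
    -- `W` preserves inner products
    (∀ φ ψ : ℤ → ℂ, memH q a φ → memH q a ψ →
      ∑ k : ZMod q, Wmap q a φ k * (starRingEnd ℂ) (Wmap q a ψ k) = ipH q φ ψ) ∧
    -- `W` is a bijection from `H_{χ,q}` onto `ℂ^{ℤ/qℤ}`
    (∀ ξ : EuclideanSpace ℂ (ZMod q), ∃! φ : ℤ → ℂ, memH q a φ ∧ Wmap q a φ = ξ) ∧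
    -- intertwining: `W ∘ T(n) = ρ_{(p/q, x₂, x₃+a)}(n) ∘ W` on `H_{χ,q}`
    (∀ (n : ℤ × ℤ × ℤ) (φ : ℤ → ℂ), memH q a φ →
      Wmap q a (Text q p x₂ x₃ n φ) = rhoFin q p x₂ (x₃ + a) n (Wmap q a φ)) := by
  
  have hq : (q : ℂ) ≠ 0 := Nat.cast_ne_zero.mpr (NeZero.ne q)
  refine ⟨?part1, ?part2, ?part3, ?part4, ?part5, ?part6, ?part7, ?part8⟩
  case part1 =>
    intro n φ hφ k
    simp only [Text]
    rw [show k + (q:ℤ) + n.2.2 = (k + n.2.2) + (q:ℤ) from by ring, hφ]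
    have e1 : (2 * (π:ℂ) * Complex.I / q) *
        ((n.2.2 : ℂ) * x₃ + (n.2.1 : ℂ) * x₂ + (n.1 : ℂ) * p + ((k + (q:ℤ) : ℤ) : ℂ) * n.2.1 * p)
        = (2 * (π:ℂ) * Complex.I / q) *
        ((n.2.2 : ℂ) * x₃ + (n.2.1 : ℂ) * x₂ + (n.1 : ℂ) * p + (k : ℂ) * n.2.1 * p)
          + ((n.2.1 * p : ℤ) : ℂ) * (2 * π * Complex.I) := by
      push_cast
      field_simp
      ring
    rw [e1, Complex.exp_add, Complex.exp_int_mul_two_pi_mul_I, mul_one]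
    ring
  case part2 =>
    intro n c φ ψ
    funext k
    simp only [Text, Pi.add_apply, Pi.smul_apply, smul_eq_mul]
    ring
  case part3 =>
    intro n φ ψ hφ hψ
    simp only [ipH, Text]
    have step1 : ∀ k ∈ Finset.range q,
        Complex.exp ((2 * (π:ℂ) * Complex.I / q) *
          ((n.2.2 : ℂ) * x₃ + (n.2.1 : ℂ) * x₂ + (n.1 : ℂ) * p + (((k:ℤ)) : ℂ) * n.2.1 * p)) *
          φ ((k:ℤ) + n.2.2) *
        (starRingEnd ℂ) (Complex.exp ((2 * (π:ℂ) * Complex.I / q) *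
          ((n.2.2 : ℂ) * x₃ + (n.2.1 : ℂ) * x₂ + (n.1 : ℂ) * p + (((k:ℤ)) : ℂ) * n.2.1 * p)) *
          ψ ((k:ℤ) + n.2.2))
        = φ ((k:ℤ) + n.2.2) * (starRingEnd ℂ) (ψ ((k:ℤ) + n.2.2)) := by
      intro k _
      rw [map_mul]
      have hconj : (starRingEnd ℂ) ((2 * (π:ℂ) * Complex.I / q) *
          ((n.2.2 : ℂ) * x₃ + (n.2.1 : ℂ) * x₂ + (n.1 : ℂ) * p + (((k:ℤ)) : ℂ) * n.2.1 * p))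
          = -((2 * (π:ℂ) * Complex.I / q) *
          ((n.2.2 : ℂ) * x₃ + (n.2.1 : ℂ) * x₂ + (n.1 : ℂ) * p + (((k:ℤ)) : ℂ) * n.2.1 * p)) := by
        simp [map_mul, map_div₀, map_add, map_ofNat, Complex.conj_I]
        all_goals ring
      calc _ = (Complex.exp _ * (starRingEnd ℂ) (Complex.exp _)) *
              (φ ((k:ℤ) + n.2.2) * (starRingEnd ℂ) (ψ ((k:ℤ) + n.2.2))) := by ring
        _ = _ := by rw [exp_mul_conj_exp _ hconj, one_mul]
    rw [Finset.sum_congr rfl step1]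
    set g : ℤ → ℂ := fun k => φ k * (starRingEnd ℂ) (ψ k) with hgdef
    have hg0 : memH q 0 g := by
      intro k
      simp only [hgdef, hφ k, hψ k, map_mul, chiA_zero, one_mul]
      have : chiA a * (starRingEnd ℂ) (chiA a) = 1 := by
        apply exp_mul_conj_exp
        simp [chiA, map_mul, map_ofNat, Complex.conj_I]
        all_goals ring
      calc chiA a * φ k * ((starRingEnd ℂ) (chiA a) * (starRingEnd ℂ) (ψ k))
          = (chiA a * (starRingEnd ℂ) (chiA a)) * (φ k * (starRingEnd ℂ) (ψ k)) := by ring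
        _ = φ k * (starRingEnd ℂ) (ψ k) := by rw [this, one_mul]
    have hg : ∀ m k : ℤ, g (k + q * m) = g k := by
      intro m k
      rw [memH_shift hg0 m k, chiA_zero, one_zpow, one_mul]
    exact sum_shift q g hg n.2.2
  case part4 =>
    intro n ψ hψ
    refine ⟨fun k => Complex.exp (-((2 * (π:ℂ) * Complex.I / q) *
        ((n.2.2 : ℂ) * x₃ + (n.2.1 : ℂ) * x₂ + (n.1 : ℂ) * p + ((k : ℂ) - n.2.2) * n.2.1 * p))) *
        ψ (k - n.2.2), ?_, ?_⟩
    · intro k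
      dsimp only
      rw [show k + (q:ℤ) - n.2.2 = (k - n.2.2) + (q:ℤ) from by ring, hψ]
      have e1 : -((2 * (π:ℂ) * Complex.I / q) *
          ((n.2.2 : ℂ) * x₃ + (n.2.1 : ℂ) * x₂ + (n.1 : ℂ) * p + (((k + (q:ℤ) : ℤ) : ℂ) - n.2.2) * n.2.1 * p))
          = -((2 * (π:ℂ) * Complex.I / q) *
          ((n.2.2 : ℂ) * x₃ + (n.2.1 : ℂ) * x₂ + (n.1 : ℂ) * p + ((k : ℂ) - n.2.2) * n.2.1 * p))
            + ((-(n.2.1 * p) : ℤ) : ℂ) * (2 * π * Complex.I) := by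
        push_cast
        field_simp
        ring
      rw [e1, Complex.exp_add, Complex.exp_int_mul_two_pi_mul_I, mul_one]
      ring
    · funext k
      simp only [Text]
      rw [show k + n.2.2 - n.2.2 = k from by ring, ← mul_assoc, ← Complex.exp_add]
      have e2 : (2 * (π:ℂ) * Complex.I / q) *
          ((n.2.2 : ℂ) * x₃ + (n.2.1 : ℂ) * x₂ + (n.1 : ℂ) * p + (k : ℂ) * n.2.1 * p)
          + -((2 * (π:ℂ) * Complex.I / q) *
          ((n.2.2 : ℂ) * x₃ + (n.2.1 : ℂ) * x₂ + (n.1 : ℂ) * p + (((k + n.2.2 : ℤ) : ℂ) - n.2.2) * n.2.1 * p))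
          = 0 := by
        push_cast
        ring
      rw [e2, Complex.exp_zero, one_mul]
  case part5 =>
    intro c φ ψ
    ext k
    simp only [Wmap, PiLp.toLp_apply, Pi.add_apply, Pi.smul_apply, PiLp.add_apply, PiLp.smul_apply, smul_eq_mul]
    ring
  case part6 =>
    intro φ ψ hφ hψ
    have step1 : ∀ k : ZMod q, Wmap q a φ k * (starRingEnd ℂ) (Wmap q a ψ k)
        = φ (k.val : ℤ) * (starRingEnd ℂ) (ψ (k.val : ℤ)) := by
      intro k
      simp only [Wmap, PiLp.toLp_apply]
      rw [map_mul]
      have hconj : (starRingEnd ℂ) (-(2 * (π:ℂ) * Complex.I * (k.val : ℂ) * (a : ℝ) / q))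
          = -(-(2 * (π:ℂ) * Complex.I * (k.val : ℂ) * (a : ℝ) / q)) := by
        simp [map_mul, map_div₀, map_ofNat, Complex.conj_I, -ZMod.natCast_val]
        all_goals ring
      calc _ = (Complex.exp _ * (starRingEnd ℂ) (Complex.exp _)) *
              (φ (k.val : ℤ) * (starRingEnd ℂ) (ψ (k.val : ℤ))) := by ring
        _ = _ := by rw [exp_mul_conj_exp _ hconj, one_mul]
    rw [Fintype.sum_congr _ _ step1]
    rw [← sum_range_eq_sum_zmod q (fun x : ZMod q => φ (x.val : ℤ) * (starRingEnd ℂ) (ψ (x.val : ℤ)))]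
    refine Finset.sum_congr rfl fun k hk => ?_
    simp [ZMod.val_cast_of_lt (Finset.mem_range.mp hk)]
  case part7 =>
    intro ξ
    set φ₀ : ℤ → ℂ := fun k =>
      Complex.exp (2 * (π:ℂ) * Complex.I * (k : ℂ) * (a : ℝ) / q) * ξ ((k : ℤ) : ZMod q)
      with hφ₀def
    have hmem : memH q a φ₀ := by
      intro k
      simp only [hφ₀def]
      have e1 : ((k + (q:ℤ) : ℤ) : ZMod q) = ((k : ℤ) : ZMod q) := by
        push_cast
        simp
      rw [e1]
      have e2 : 2 * (π:ℂ) * Complex.I * (((k + (q:ℤ) : ℤ)) : ℂ) * (a : ℝ) / q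
          = 2 * (π:ℂ) * Complex.I * (a : ℝ) + 2 * (π:ℂ) * Complex.I * (k : ℂ) * (a : ℝ) / q := by
        push_cast
        field_simp
        ring
      rw [e2, Complex.exp_add, chiA]
      ring
    have hW : Wmap q a φ₀ = ξ := by
      ext k
      simp only [Wmap, PiLp.toLp_apply, hφ₀def]
      rw [← mul_assoc, ← Complex.exp_add]
      have e3 : -(2 * (π:ℂ) * Complex.I * (k.val : ℂ) * (a : ℝ) / q)
          + 2 * (π:ℂ) * Complex.I * (((k.val : ℤ)) : ℂ) * (a : ℝ) / q = 0 := by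
        push_cast
        ring
      rw [e3, Complex.exp_zero, one_mul]
      exact congrArg ξ.ofLp (by push_cast; exact ZMod.natCast_rightInverse k)
    refine ⟨φ₀, ⟨hmem, hW⟩, ?_⟩
    rintro φ' ⟨h1, h2⟩
    funext z
    obtain ⟨m, hm⟩ := val_shift q z
    have hval : φ' (((z : ZMod q).val : ℤ)) = φ₀ (((z : ZMod q).val : ℤ)) := by
      have := congrFun (congrArg WithLp.ofLp (h2.trans hW.symm)) ((z : ZMod q))
      simp only [Wmap, PiLp.toLp_apply] at this
      exact mul_left_cancel₀ (Complex.exp_ne_zero _) this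
    conv_lhs => rw [hm]
    conv_rhs => rw [hm]
    rw [memH_shift h1, memH_shift hmem, hval]
  case part8 =>
    intro n φ hφ
    ext k
    simp only [Wmap, Text, rhoFin, PiLp.toLp_apply]
    set v : ℤ := (((k + ((n.2.2 : ℤ) : ZMod q)).val : ℕ) : ℤ) with hvdef
    have h0 : ((((k.val : ℤ) + n.2.2 - v) : ℤ) : ZMod q) = 0 := by
      simp only [hvdef]
      push_cast
      simp [ZMod.natCast_val, ZMod.cast_id]
    obtain ⟨m, hm⟩ := (ZMod.intCast_zmod_eq_zero_iff_dvd _ q).mp h0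
    have hm' : (k.val : ℤ) + n.2.2 = v + q * m := by linarith
    rw [show (k.val : ℤ) + n.2.2 = v + q * m from hm', memH_shift hφ]
    have hchi : chiA a ^ m = Complex.exp (2 * (π:ℂ) * Complex.I * (a : ℝ) * m) := by
      rw [chiA, ← Complex.exp_int_mul]
      congr 1
      ring
    rw [hchi]
    simp only [← mul_assoc, ← Complex.exp_add]
    have hc : (v : ℂ) + q * m = (k.val : ℂ) + n.2.2 := by exact_mod_cast hm'.symm
    congr 2
    rw [hvdef] at hm'
    have hc2 : (((k + ((n.2.2 : ℤ) : ZMod q)).val : ℕ) : ℂ) + q * m = (k.val : ℂ) + n.2.2 := by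
      exact_mod_cast hm'.symm
    have e1 : (ZMod.cast k : ℂ) = ((k.val : ℕ) : ℂ) := (ZMod.natCast_val k).symm
    have e2 : (ZMod.cast (k + ((n.2.2 : ℤ) : ZMod q)) : ℂ)
        = (((k + ((n.2.2 : ℤ) : ZMod q)).val : ℕ) : ℂ) := (ZMod.natCast_val _).symm
    push_cast
    field_simp
    linear_combination (a:ℂ) * hc2
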